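/- arXiv:2506.11647 — 3 statements merged into one kernel-verified Lean document; each statement's English description precedes it below -/
import Mathlib

section
/- Let {W_t}_{t≥1} be a sequence of N×N doubly stochastic matrices such that every nonzero entry of W_t is at least η ∈ (0,1), every diagonal entry [W_t]_{ii} ≥ η, and the graph sequence is B-strongly connected. Define Φ(t,s) = W_{t−1}···W_{s+1}W_s for t > s and Φ(s,s) = I_N. Then for every k ≥ s ≥ 1 and all i, j ∈ [N], |[Φ(k,s)]_{ij} − 1/N| ≤ γ β^{k−s}, where γ = (1 − η/(4N²))^{−2} and β = (1 − η/(4N²))^{1/B}. -/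
/-!
Follow one column of `Φ(k, s)` minus its mean `1/N`. A doubly stochastic step lowers the sum
of squares of this deviation by exactly the total variance of its rows. Within a window of `B`
steps, every gap between consecutive sorted initial values is bridged by the support of a single
row: the cut at that gap stays closed until an edge crosses it, and the self-loop at the tail
puts both ends of the crossing edge into one row. Cauchy-Schwarz over the fewer than `N` gaps
then shows that a window loses at least the fraction `η / (2N²) ≥ 1 - (1 - η/(4N²))²` of the
energy, and iterating over `⌊(k - s)/B⌋` windows gives the bound.
-/

open Finset

/-- A matrix is doubly stochastic: nonnegative entries, all row sums and
column sums equal to one. -/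
def IsDoublyStochasticMat {N : ℕ} (W : Matrix (Fin N) (Fin N) ℝ) : Prop :=
  (∀ i j, 0 ≤ W i j) ∧ (∀ i, ∑ j, W i j = 1) ∧ (∀ j, ∑ i, W i j = 1)

/-- The graph sequence induced by the matrices `W t` (edge `(i,j)` at time `t`
iff `W t i j > 0`) is `B`-strongly connected: for every `t ≥ 1` the digraph
whose edges are the union of the edge sets at times `t, …, t+B-1` is strongly
connected (any node reaches any other along edges of the union graph). -/
def BStronglyConnectedSeq {N : ℕ} (W : ℕ → Matrix (Fin N) (Fin N) ℝ) (B : ℕ) : Prop :=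
  ∀ t, 1 ≤ t → ∀ i j : Fin N,
    Relation.ReflTransGen (fun a b => ∃ l, l < B ∧ 0 < W (t + l) a b) i j

/-- The transition matrix `Φ(k,s) = W_{k-1} ⋯ W_{s+1} W_s` (and `Φ(s,s) = I`). -/
noncomputable def transMat {N : ℕ} (W : ℕ → Matrix (Fin N) (Fin N) ℝ) (k s : ℕ) :
    Matrix (Fin N) (Fin N) ℝ :=
  (List.range (k - s)).foldl (fun M l => W (s + l) * M) 1

open Matrix

lemma Relation.ReflTransGen.exists_exit {α : Type*} {R : α → α → Prop} {a b : α} {P : α → Prop}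
    (h : Relation.ReflTransGen R a b) (ha : P a) (hb : ¬ P b) : ∃ c d, P c ∧ ¬ P d ∧ R c d := by
  by_contra! hclosed
  refine hb ?_
  clear hb
  induction h with
  | refl => exact ha
  | tail _ hcd ih => exact not_not.1 fun hd => hclosed _ _ ih hd hcd

lemma Monotone.sum_sub_le_of_forall_mem {y : ℕ → ℝ} (hy : Monotone y) {T : Finset ℕ}
    (hT : T.Nonempty) {lo hi : ℝ} (hlohi : ∀ l ∈ T, lo ≤ y l ∧ y (l + 1) ≤ hi) :
    ∑ l ∈ T, (y (l + 1) - y l) ≤ hi - lo := by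
  have hsub : T ⊆ Ico (T.min' hT) (T.max' hT + 1) := fun l hl =>
    mem_Ico.2 ⟨T.min'_le l hl, Nat.lt_succ_of_le (T.le_max' l hl)⟩
  calc ∑ l ∈ T, (y (l + 1) - y l)
      ≤ ∑ l ∈ Ico (T.min' hT) (T.max' hT + 1), (y (l + 1) - y l) :=
        sum_le_sum_of_subset_of_nonneg hsub fun l _ _ => sub_nonneg.2 (hy l.le_succ)
    _ = y (T.max' hT + 1) - y (T.min' hT) := sum_Ico_sub y (by have := T.min'_le_max' hT; omega)
    _ ≤ hi - lo := sub_le_sub (hlohi _ (T.max'_mem hT)).2 (hlohi _ (T.min'_mem hT)).1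

/-- Gaps with the same `F l = k` are disjoint subintervals of `[lo k, hi k]`; Cauchy-Schwarz
over the `n` gaps does the rest. -/
lemma Monotone.sq_sub_le_of_cover {y : ℕ → ℝ} (hy : Monotone y) {κ : Type*} [DecidableEq κ]
    {K : Finset κ} (lo hi : κ → ℝ) (n : ℕ) (F : ℕ → κ)
    (hF : ∀ l < n, y l < y (l + 1) → F l ∈ K ∧ lo (F l) ≤ y l ∧ y (l + 1) ≤ hi (F l)) :
    (y n - y 0) ^ 2 ≤ n * ∑ k ∈ K, (hi k - lo k) ^ 2 := by
  set g : ℕ → ℝ := fun l => y (l + 1) - y l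
  have hg : ∀ l, 0 ≤ g l := fun l => sub_nonneg.2 (hy l.le_succ)
  set T := (range n).filter fun l => y l < y (l + 1)
  have hT : ∑ l ∈ T, g l ^ 2 = ∑ l ∈ range n, g l ^ 2 :=
    sum_filter_of_ne fun l _ hl => sub_pos.1 <| (hg l).lt_of_ne' fun h => hl (by rw [h]; ring)
  have hmaps : ∀ l ∈ T, F l ∈ K := fun l hl =>
    (hF l (mem_range.1 (mem_filter.1 hl).1) (mem_filter.1 hl).2).1
  have hfiber : ∀ k ∈ K, ∑ l ∈ T with F l = k, g l ^ 2 ≤ (hi k - lo k) ^ 2 := by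
    intro k _
    rcases (T.filter (F · = k)).eq_empty_or_nonempty with hempty | hne
    · rw [hempty, sum_empty]
      positivity
    have hbounds : ∀ l ∈ T.filter (F · = k), lo k ≤ y l ∧ y (l + 1) ≤ hi k := by
      intro l hl
      obtain ⟨hlT, rfl⟩ := mem_filter.1 hl
      exact (hF l (mem_range.1 (mem_filter.1 hlT).1) (mem_filter.1 hlT).2).2
    calc ∑ l ∈ T with F l = k, g l ^ 2 ≤ (∑ l ∈ T with F l = k, g l) ^ 2 :=
          sum_sq_le_sq_sum_of_nonneg fun l _ => hg l
      _ ≤ (hi k - lo k) ^ 2 :=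
          pow_le_pow_left₀ (sum_nonneg fun l _ => hg l) (hy.sum_sub_le_of_forall_mem hne hbounds) 2
  calc (y n - y 0) ^ 2 = (∑ l ∈ range n, g l) ^ 2 := by rw [sum_range_sub]
    _ ≤ n * ∑ l ∈ range n, g l ^ 2 := by
        simpa using sq_sum_le_card_mul_sum_sq (s := range n) (f := g)
    _ = n * ∑ k ∈ K, ∑ l ∈ T with F l = k, g l ^ 2 := by rw [sum_fiberwise_of_maps_to hmaps, hT]
    _ ≤ n * ∑ k ∈ K, (hi k - lo k) ^ 2 := by gcongr with k hk; exact hfiber k hk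

lemma exists_monotone_enum {ι : Type*} [Fintype ι] [Nonempty ι] (f : ι → ℝ) :
    ∃ y : ℕ → ℝ, Monotone y ∧ (∀ a, ∃ l < Fintype.card ι, f a = y l) ∧ ∀ l, ∃ a, y l = f a := by
  set n := Fintype.card ι
  have hn : 0 < n := Fintype.card_pos
  set e := Fintype.equivFin ι
  set z := f ∘ e.symm
  set σ := Tuple.sort z
  let clamp : ℕ → Fin n := fun l => ⟨min l (n - 1), by omega⟩
  refine ⟨fun l => (z ∘ σ) (clamp l), (Tuple.monotone_sort z).comp fun l l' h => ?_,
    fun a => ⟨σ.symm (e a), (σ.symm (e a)).isLt, ?_⟩, fun l => ⟨e.symm (σ (clamp l)), rfl⟩⟩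
  · simp only [clamp, Fin.mk_le_mk]
    omega
  · have : clamp (σ.symm (e a)) = σ.symm (e a) := Fin.ext (by simp [clamp]; omega)
    simp [this, z]

lemma sq_le_sq_sub_of_sum_eq_zero {ι : Type*} [Fintype ι] {x : ι → ℝ} (hx : ∑ a, x a = 0)
    {m M : ℝ} (hm : ∀ a, m ≤ x a) (hM : ∀ a, x a ≤ M) (a : ι) : x a ^ 2 ≤ (M - m) ^ 2 := by
  obtain ⟨b, -, hb⟩ := exists_le_of_sum_le (f := 0) (g := x) ⟨a, mem_univ a⟩ (by simp [hx])
  obtain ⟨c, -, hc⟩ := exists_le_of_sum_le (f := x) (g := 0) ⟨a, mem_univ a⟩ (by simp [hx])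
  have := hm a; have := hM a; have := hM b; have := hm c
  simp only [Pi.zero_apply] at hb hc
  exact sq_le_sq' (by linarith) (by linarith)

lemma Antitone.le_pow_div_mul {V : ℕ → ℝ} (hV : Antitone V) {B : ℕ} {c : ℝ} (hc : 0 ≤ c)
    (hwin : ∀ r, V (r + B) ≤ c * V r) (n : ℕ) : V n ≤ c ^ (n / B) * V 0 := by
  have hmul : ∀ q, V (q * B) ≤ c ^ q * V 0 := by
    intro q
    induction q with
    | zero => simp
    | succ q ih =>
      calc V ((q + 1) * B) = V (q * B + B) := by rw [add_one_mul]
        _ ≤ c * V (q * B) := hwin _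
        _ ≤ c * (c ^ q * V 0) := mul_le_mul_of_nonneg_left ih hc
        _ = c ^ (q + 1) * V 0 := by ring
  exact (hV (Nat.div_mul_le_self n B)).trans (hmul _)

lemma pow_div_le_rpow_neg_two_mul {c : ℝ} (hc0 : 0 < c) (hc1 : c ≤ 1) {B : ℕ} (hB : 0 < B)
    (n : ℕ) : c ^ (n / B) ≤ c ^ (-2 : ℝ) * (c ^ ((1 : ℝ) / B)) ^ n := by
  have hBr : (0 : ℝ) < B := by exact_mod_cast hB
  have hfloor : (n : ℝ) / B - 2 ≤ (n / B : ℕ) := by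
    have : (n : ℝ) < (n / B : ℕ) * B + B := by exact_mod_cast Nat.lt_div_mul_add hB
    have : (n : ℝ) / B < (n / B : ℕ) + 1 := by rw [div_lt_iff₀ hBr]; linarith
    linarith
  rw [← Real.rpow_natCast, ← Real.rpow_natCast, ← Real.rpow_mul hc0.le, ← Real.rpow_add hc0]
  have hexp : (1 : ℝ) / B * n = n / B := by ring
  exact Real.rpow_le_rpow_of_exponent_ge hc0 hc1 (by linarith)

section Stochastic

variable {ι : Type*} [Fintype ι] [DecidableEq ι] {M : Matrix ι ι ℝ} {x : ι → ℝ}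

lemma mulVec_apply_le_of_forall_pos (hM : M ∈ rowStochastic ℝ ι) {a : ι} {θ : ℝ}
    (hx : ∀ b, 0 < M a b → x b ≤ θ) : (M *ᵥ x) a ≤ θ := by
  calc (M *ᵥ x) a = ∑ b, M a b * x b := rfl
    _ ≤ ∑ b, M a b * θ := sum_le_sum fun b _ => by
        rcases (nonneg_of_mem_rowStochastic hM (i := a) (j := b)).lt_or_eq with h | h
        · exact mul_le_mul_of_nonneg_left (hx b h) h.le
        · simp [← h]
    _ = θ := by rw [← sum_mul, sum_row_of_mem_rowStochastic hM, one_mul]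

lemma le_mulVec_apply_of_forall_pos (hM : M ∈ rowStochastic ℝ ι) {a : ι} {θ : ℝ}
    (hx : ∀ b, 0 < M a b → θ ≤ x b) : θ ≤ (M *ᵥ x) a := by
  have := mulVec_apply_le_of_forall_pos hM (x := -x) (θ := -θ) fun b hb => neg_le_neg (hx b hb)
  rwa [mulVec_neg, Pi.neg_apply, neg_le_neg_iff] at this

def rowVariance (M : Matrix ι ι ℝ) (x : ι → ℝ) (a : ι) : ℝ :=
  ∑ b, M a b * (x b - (M *ᵥ x) a) ^ 2

lemma rowVariance_nonneg (hM : M ∈ rowStochastic ℝ ι) (a : ι) : 0 ≤ rowVariance M x a :=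
  sum_nonneg fun _ _ => mul_nonneg (nonneg_of_mem_rowStochastic hM) (sq_nonneg _)

lemma rowVariance_eq (hM : M ∈ rowStochastic ℝ ι) (a : ι) :
    rowVariance M x a = ∑ b, M a b * x b ^ 2 - (M *ᵥ x) a ^ 2 := by
  have hmean : ∑ b, M a b * x b = (M *ᵥ x) a := rfl
  calc rowVariance M x a
      = ∑ b, M a b * x b ^ 2 - 2 * (M *ᵥ x) a * ∑ b, M a b * x b
          + (M *ᵥ x) a ^ 2 * ∑ b, M a b := by
        simp only [rowVariance, mul_sum, ← sum_sub_distrib, ← sum_add_distrib]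
        exact sum_congr rfl fun b _ => by ring
    _ = _ := by rw [hmean, sum_row_of_mem_rowStochastic hM]; ring

lemma sum_sq_mulVec_add_sum_rowVariance (hM : M ∈ doublyStochastic ℝ ι) :
    ∑ a, (M *ᵥ x) a ^ 2 + ∑ a, rowVariance M x a = ∑ a, x a ^ 2 := by
  have hrow := (mem_doublyStochastic_iff_mem_rowStochastic_and_mem_colStochastic.1 hM).1
  simp only [rowVariance_eq hrow, sum_sub_distrib, add_sub_cancel]
  rw [sum_comm]
  exact sum_congr rfl fun b _ => by rw [← sum_mul, sum_col_of_mem_doublyStochastic hM, one_mul]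

lemma sq_sub_le_rowVariance (hM : M ∈ rowStochastic ℝ ι) {η : ℝ} {a p q : ι}
    (hp : η ≤ M a p) (hq : η ≤ M a q) : η / 2 * (x p - x q) ^ 2 ≤ rowVariance M x a := by
  rcases lt_or_ge η 0 with hη | hη
  · exact (mul_nonpos_of_nonpos_of_nonneg (by linarith) (sq_nonneg _)).trans
      (rowVariance_nonneg hM a)
  rcases eq_or_ne p q with rfl | hpq
  · simpa using rowVariance_nonneg hM a
  set c := (M *ᵥ x) a
  have hpair : M a p * (x p - c) ^ 2 + M a q * (x q - c) ^ 2 ≤ rowVariance M x a := by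
    rw [← sum_pair hpq (f := fun b => M a b * (x b - c) ^ 2)]
    exact sum_le_sum_of_subset_of_nonneg (subset_univ _) fun b _ _ =>
      mul_nonneg (nonneg_of_mem_rowStochastic hM) (sq_nonneg _)
  have : η * (x p - c) ^ 2 ≤ M a p * (x p - c) ^ 2 := by gcongr
  have : η * (x q - c) ^ 2 ≤ M a q * (x q - c) ^ 2 := by gcongr
  nlinarith [mul_nonneg hη (sq_nonneg (x p + x q - 2 * c))]

end Stochastic

lemma exists_extreme_support {ι : Type*} [Fintype ι] {M : Matrix ι ι ℝ} {a : ι}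
    (ha : 0 < M a a) (x : ι → ℝ) :
    ∃ p q, 0 < M a p ∧ 0 < M a q ∧ ∀ b, 0 < M a b → x q ≤ x b ∧ x b ≤ x p := by
  have hne : (univ.filter (0 < M a ·)).Nonempty := ⟨a, by simpa using ha⟩
  obtain ⟨p, hp, hpmax⟩ := exists_max_image _ x hne
  obtain ⟨q, hq, hqmin⟩ := exists_min_image _ x hne
  simp only [mem_filter, mem_univ, true_and] at hp hq hpmax hqmin
  exact ⟨p, q, hp, hq, fun b hb => ⟨hqmin b hb, hpmax b hb⟩⟩

section Trajectory

variable {ι : Type*} [Fintype ι] [DecidableEq ι] {A : ℕ → Matrix ι ι ℝ} {x : ℕ → ι → ℝ}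

lemma sum_sq_sub_sum_sq_eq_sum_rowVariance (hA : ∀ r, A r ∈ doublyStochastic ℝ ι)
    (hx : ∀ r, x (r + 1) = A r *ᵥ x r) (n : ℕ) :
    ∑ a, x 0 a ^ 2 - ∑ a, x n a ^ 2 = ∑ r ∈ range n, ∑ a, rowVariance (A r) (x r) a := by
  rw [← sum_range_sub' (fun r => ∑ a, x r a ^ 2)]
  refine sum_congr rfl fun r _ => ?_
  rw [hx r, ← sum_sq_mulVec_add_sum_rowVariance (hA r) (x := x r)]
  ring

lemma antitone_sum_sq (hA : ∀ r, A r ∈ doublyStochastic ℝ ι)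
    (hx : ∀ r, x (r + 1) = A r *ᵥ x r) : Antitone fun r => ∑ a, x r a ^ 2 :=
  antitone_nat_of_succ_le fun r => by
    have hrow := (mem_doublyStochastic_iff_mem_rowStochastic_and_mem_colStochastic.1 (hA r)).1
    have := sum_sq_mulVec_add_sum_rowVariance (hA r) (x := x r)
    rw [hx r]
    linarith [sum_nonneg fun a (_ : a ∈ univ) => rowVariance_nonneg (x := x r) hrow a]

lemma separated_of_forall_lt (hA : ∀ r, A r ∈ rowStochastic ℝ ι)
    (hx : ∀ r, x (r + 1) = A r *ᵥ x r) {S : Set ι} {θ θ' : ℝ}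
    (hS : ∀ a ∈ S, x 0 a ≤ θ) (hSc : ∀ a ∉ S, θ' ≤ x 0 a) {n : ℕ}
    (hsep : ∀ r < n, ∀ a b, 0 < A r a b → (a ∈ S ↔ b ∈ S)) :
    (∀ a ∈ S, x n a ≤ θ) ∧ ∀ a ∉ S, θ' ≤ x n a := by
  induction n with
  | zero => exact ⟨hS, hSc⟩
  | succ n ih =>
    obtain ⟨ihS, ihSc⟩ := ih fun r hr => hsep r (by omega)
    have hsepn := hsep n n.lt_succ_self
    rw [hx n]
    exact ⟨fun a ha => mulVec_apply_le_of_forall_pos (hA n) fun b hb =>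
        ihS b ((hsepn a b hb).1 ha),
      fun a ha => le_mulVec_apply_of_forall_pos (hA n) fun b hb =>
        ihSc b (mt (hsepn a b hb).2 ha)⟩

/-- If no value of `x 0` lies in `(θ, θ')`, the cut `{a | x 0 a ≤ θ}` stays separated until
the first time an edge crosses it; that edge, together with the self-loop at its tail, puts
two support points of one row on opposite sides of the gap. -/
lemma exists_row_straddling_of_gap (hA : ∀ r, A r ∈ rowStochastic ℝ ι) (hdiag : ∀ r a, 0 < A r a a)
    (hx : ∀ r, x (r + 1) = A r *ᵥ x r) {B : ℕ}
    (hcut : ∀ S : Set ι, S.Nonempty → Sᶜ.Nonempty → ∃ r < B, ∃ a ∈ S, ∃ b ∉ S, 0 < A r a b)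
    {θ θ' : ℝ} (hlo : ∃ a, x 0 a ≤ θ) (hhi : ∃ a, θ < x 0 a)
    (hgap : ∀ a, θ < x 0 a → θ' ≤ x 0 a) :
    ∃ r < B, ∃ a p q, 0 < A r a p ∧ 0 < A r a q ∧ x r q ≤ θ ∧ θ' ≤ x r p := by
  classical
  set S := {a | x 0 a ≤ θ}
  obtain ⟨r₁, hr₁, a₁, ha₁, b₁, hb₁, hab₁⟩ :=
    hcut S hlo (hhi.imp fun a ha => show ¬ x 0 a ≤ θ from not_le.2 ha)
  have hcross : ∃ r, ∃ a b, (a ∈ S ↔ b ∉ S) ∧ 0 < A r a b :=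
    ⟨r₁, a₁, b₁, iff_of_true ha₁ hb₁, hab₁⟩
  have hr₀ : Nat.find hcross < B :=
    (Nat.find_min' hcross ⟨a₁, b₁, iff_of_true ha₁ hb₁, hab₁⟩).trans_lt hr₁
  have hsep : ∀ r < Nat.find hcross, ∀ a b, 0 < A r a b → (a ∈ S ↔ b ∈ S) :=
    fun r hr a b hab => by_contra fun h => Nat.find_min hcross hr ⟨a, b, by tauto, hab⟩
  obtain ⟨hbelow, habove⟩ :=
    separated_of_forall_lt hA hx (fun a ha => ha) (fun a ha => hgap a (not_le.1 ha)) hsep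
  obtain ⟨a, b, hab, hpos⟩ := Nat.find_spec hcross
  by_cases ha : a ∈ S
  · exact ⟨_, hr₀, a, b, a, hpos, hdiag _ a, hbelow a ha, habove b (hab.1 ha)⟩
  · exact ⟨_, hr₀, a, a, b, hdiag _ a, hpos, hbelow b (not_not.1 (mt hab.2 ha)), habove a ha⟩

theorem sum_sq_le_of_window [Nonempty ι] {η : ℝ} (hη : 0 < η) {B : ℕ}
    (hA : ∀ r, A r ∈ doublyStochastic ℝ ι) (hmin : ∀ r a b, 0 < A r a b → η ≤ A r a b)
    (hdiag : ∀ r a, 0 < A r a a)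
    (hcut : ∀ S : Set ι, S.Nonempty → Sᶜ.Nonempty → ∃ r < B, ∃ a ∈ S, ∃ b ∉ S, 0 < A r a b)
    (hx : ∀ r, x (r + 1) = A r *ᵥ x r) (hmean : ∑ a, x 0 a = 0) :
    ∑ a, x B a ^ 2 ≤ (1 - η / (2 * Fintype.card ι ^ 2)) * ∑ a, x 0 a ^ 2 := by
  have hrow r := (mem_doublyStochastic_iff_mem_rowStochastic_and_mem_colStochastic.1 (hA r)).1
  set n := Fintype.card ι
  set D := ∑ r ∈ range B, ∑ a, rowVariance (A r) (x r) a
  obtain ⟨y, hy, hyx, hxy⟩ := exists_monotone_enum (x 0)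
  choose p q hp hq hpq using fun k : ℕ × ι => exists_extreme_support (hdiag k.1 k.2) (x k.1)
  have hcover : ∀ l, y l < y (l + 1) →
      ∃ k ∈ range B ×ˢ univ, x k.1 (q k) ≤ y l ∧ y (l + 1) ≤ x k.1 (p k) := by
    intro l hl
    have hgap a (ha : y l < x 0 a) : y (l + 1) ≤ x 0 a := by
      obtain ⟨l', -, hl'⟩ := hyx a
      rw [hl'] at ha ⊢
      exact hy (hy.reflect_lt ha)
    obtain ⟨r, hr, a, p', q', hp', hq', hq'l, hp'l⟩ := exists_row_straddling_of_gap hrow hdiag hx hcut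
      ((hxy l).imp fun a ha => ha.ge) ((hxy (l + 1)).imp fun a ha => hl.trans_eq ha) hgap
    exact ⟨(r, a), by simpa using hr, ((hpq (r, a) q' hq').1).trans hq'l,
      hp'l.trans (hpq (r, a) p' hp').2⟩
  choose! F hF using hcover
  have hgaps := hy.sq_sub_le_of_cover (fun k => x k.1 (q k)) (fun k => x k.1 (p k)) (n - 1) F
    fun l _ hl => hF l hl
  have hspread : ∑ k ∈ range B ×ˢ univ, (x k.1 (p k) - x k.1 (q k)) ^ 2 ≤ 2 / η * D := by
    rw [sum_product, mul_sum]
    refine sum_le_sum fun r _ => ?_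
    rw [mul_sum]
    refine sum_le_sum fun a _ => ?_
    have := sq_sub_le_rowVariance (x := x r) (hrow r) (hmin _ _ _ (hp (r, a)))
      (hmin _ _ _ (hq (r, a)))
    rw [div_mul_eq_mul_div, le_div_iff₀ hη]
    linarith
  have henergy : ∑ a, x 0 a ^ 2 ≤ n * (y (n - 1) - y 0) ^ 2 := by
    have hbounds a : y 0 ≤ x 0 a ∧ x 0 a ≤ y (n - 1) := by
      obtain ⟨l, hl, hxl⟩ := hyx a
      exact hxl ▸ ⟨hy l.zero_le, hy (by omega)⟩
    calc ∑ a, x 0 a ^ 2 ≤ ∑ _a : ι, (y (n - 1) - y 0) ^ 2 := sum_le_sum fun a _ =>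
          sq_le_sq_sub_of_sum_eq_zero hmean (fun a => (hbounds a).1) (fun a => (hbounds a).2) a
      _ = n * (y (n - 1) - y 0) ^ 2 := by simp [n]
  have hn : (0 : ℝ) < n := by exact_mod_cast Fintype.card_pos
  have hD : 0 ≤ D := sum_nonneg fun r _ => sum_nonneg fun a _ => rowVariance_nonneg (hrow r) a
  have hbound : ∑ a, x 0 a ^ 2 ≤ n ^ 2 * (2 / η * D) :=
    calc ∑ a, x 0 a ^ 2 ≤ n * ((n - 1 : ℕ) * (2 / η * D)) :=
          henergy.trans (by gcongr; exact hgaps.trans (by gcongr))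
      _ ≤ n * (n * (2 / η * D)) := by gcongr; exact_mod_cast n.sub_le 1
      _ = n ^ 2 * (2 / η * D) := by ring
  have hloss : η / (2 * n ^ 2) * ∑ a, x 0 a ^ 2 ≤ D :=
    calc η / (2 * n ^ 2) * ∑ a, x 0 a ^ 2 ≤ η / (2 * n ^ 2) * (n ^ 2 * (2 / η * D)) := by
          gcongr
      _ = D := by field_simp
  linarith [sum_sq_sub_sum_sq_eq_sum_rowVariance hA hx B]

end Trajectory

lemma BStronglyConnectedSeq.exists_cut_edge {N B : ℕ} {W : ℕ → Matrix (Fin N) (Fin N) ℝ}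
    (h : BStronglyConnectedSeq W B) {t : ℕ} (ht : 1 ≤ t) (S : Set (Fin N)) (hS : S.Nonempty)
    (hSc : Sᶜ.Nonempty) : ∃ r < B, ∃ a ∈ S, ∃ b ∉ S, 0 < W (t + r) a b := by
  obtain ⟨a, ha⟩ := hS
  obtain ⟨b, hb⟩ := hSc
  obtain ⟨c, d, hc, hd, r, hr, hcd⟩ := (h t ht a b).exists_exit ha hb
  exact ⟨r, hr, c, hc, d, hd, hcd⟩

lemma sum_sq_single_sub_le_one {N : ℕ} (j : Fin N) :
    ∑ a, ((Pi.single j 1 : Fin N → ℝ) - (1 / N : ℝ) • 1) a ^ 2 ≤ 1 := by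
  have hN : (N : ℝ) * ((N : ℝ) ^ 2)⁻¹ = (N : ℝ)⁻¹ := by
    rw [sq, mul_inv, ← mul_assoc]
    rcases eq_or_ne (N : ℝ) 0 with h | h <;> simp [h]
  simp [sub_sq, sum_add_distrib, sum_sub_distrib, Pi.single_apply, hN]
  linarith [inv_nonneg.2 (Nat.cast_nonneg (α := ℝ) N)]

section TransMat

variable {N : ℕ} (W : ℕ → Matrix (Fin N) (Fin N) ℝ) (s : ℕ)

lemma transMat_eq_add_sub (k : ℕ) : transMat W k s = transMat W (s + (k - s)) s := by
  simp only [transMat, Nat.add_sub_cancel_left]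

lemma transMat_self : transMat W s s = 1 := by
  simp [transMat]

lemma transMat_add_succ (n : ℕ) :
    transMat W (s + (n + 1)) s = W (s + n) * transMat W (s + n) s := by
  simp [transMat, List.range_succ, List.foldl_append]

variable {W s}

lemma transMat_mem_doublyStochastic (hW : ∀ t, s ≤ t → W t ∈ doublyStochastic ℝ (Fin N))
    (n : ℕ) : transMat W (s + n) s ∈ doublyStochastic ℝ (Fin N) := by
  induction n with
  | zero => exact (transMat_self W s).symm ▸ one_mem _
  | succ n ih => exact transMat_add_succ W s n ▸ mul_mem (hW _ (by omega)) ih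

variable (W s) in
/-- Column `j` of `Φ(s + n, s)` minus `1/N`, written as a trajectory of the `W t`. -/
noncomputable def colDeviation (j : Fin N) (n : ℕ) : Fin N → ℝ :=
  transMat W (s + n) s *ᵥ (Pi.single j 1 - (1 / N : ℝ) • 1)

lemma colDeviation_succ (j : Fin N) (n : ℕ) :
    colDeviation W s j (n + 1) = W (s + n) *ᵥ colDeviation W s j n := by
  simp only [colDeviation, transMat_add_succ, mulVec_mulVec]

lemma colDeviation_apply (hW : ∀ t, s ≤ t → W t ∈ doublyStochastic ℝ (Fin N)) (j i : Fin N)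
    (n : ℕ) : colDeviation W s j n i = transMat W (s + n) s i j - 1 / N := by
  simp [colDeviation, mulVec_sub, mulVec_smul,
    mulVec_one_of_mem_doublyStochastic (transMat_mem_doublyStochastic hW n)]

lemma sum_colDeviation (hW : ∀ t, s ≤ t → W t ∈ doublyStochastic ℝ (Fin N)) (j : Fin N)
    (n : ℕ) : ∑ a, colDeviation W s j n a = 0 := by
  rw [colDeviation, sum_mulVec_of_mem_doublyStochastic (transMat_mem_doublyStochastic hW n)]
  simp [sum_sub_distrib, (Nat.cast_pos.2 j.pos).ne']

lemma sum_sq_colDeviation_zero_le_one (j : Fin N) : ∑ a, colDeviation W s j 0 a ^ 2 ≤ 1 := by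
  simpa [colDeviation, transMat_self] using sum_sq_single_sub_le_one j

lemma sum_sq_colDeviation_add_le {B : ℕ} {η : ℝ} (hη : 0 < η)
    (hds : ∀ t, 1 ≤ t → IsDoublyStochasticMat (W t))
    (hmin : ∀ t, 1 ≤ t → ∀ i j, W t i j ≠ 0 → η ≤ W t i j)
    (hdiag : ∀ t, 1 ≤ t → ∀ i, η ≤ W t i i) (hconn : BStronglyConnectedSeq W B) (hs : 1 ≤ s)
    (j : Fin N) (n : ℕ) :
    ∑ a, colDeviation W s j (n + B) a ^ 2 ≤
      (1 - η / (2 * N ^ 2)) * ∑ a, colDeviation W s j n a ^ 2 := by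
  have : Nonempty (Fin N) := ⟨j⟩
  have hW t (ht : s ≤ t) : W t ∈ doublyStochastic ℝ (Fin N) :=
    mem_doublyStochastic_iff_sum.2 (hds t (by omega))
  simpa using sum_sq_le_of_window (A := fun r => W (s + n + r))
    (x := fun r => colDeviation W s j (n + r)) hη
    (fun r => hW _ (by omega)) (fun r a b hab => hmin _ (by omega) a b hab.ne')
    (fun r a => hη.trans_le (hdiag _ (by omega) a)) (hconn.exists_cut_edge (by omega))
    (fun r => by rw [← add_assoc, colDeviation_succ, add_assoc]) (sum_colDeviation hW j n)

end TransMat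

lemma abs_le_pow_div_of_window {ι : Type*} [Fintype ι] {x : ℕ → ι → ℝ} {B : ℕ} {c : ℝ}
    (hc : 0 ≤ c) (hV : Antitone fun n => ∑ a, x n a ^ 2)
    (hwin : ∀ n, ∑ a, x (n + B) a ^ 2 ≤ c ^ 2 * ∑ a, x n a ^ 2) (h0 : ∑ a, x 0 a ^ 2 ≤ 1)
    (n : ℕ) (i : ι) : |x n i| ≤ c ^ (n / B) := by
  refine abs_le_of_sq_le_sq ?_ (pow_nonneg hc _)
  calc x n i ^ 2 ≤ ∑ a, x n a ^ 2 :=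
        single_le_sum (f := fun a => x n a ^ 2) (fun a _ => sq_nonneg _) (mem_univ i)
    _ ≤ (c ^ 2) ^ (n / B) * ∑ a, x 0 a ^ 2 := hV.le_pow_div_mul (sq_nonneg c) hwin n
    _ ≤ (c ^ (n / B)) ^ 2 := by
        rw [← pow_mul, ← pow_mul']
        exact mul_le_of_le_one_right (pow_nonneg hc _) h0

theorem stmt0_general {N B : ℕ} (hB : 0 < B) {η : ℝ} (hη : η ∈ Set.Ioo (0:ℝ) 1)
    (W : ℕ → Matrix (Fin N) (Fin N) ℝ)
    (hds : ∀ t, 1 ≤ t → IsDoublyStochasticMat (W t))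
    (hmin : ∀ t, 1 ≤ t → ∀ i j, W t i j ≠ 0 → η ≤ W t i j)
    (hdiag : ∀ t, 1 ≤ t → ∀ i, η ≤ W t i i)
    (hconn : BStronglyConnectedSeq W B)
    (γ β : ℝ)
    (hγ : γ = (1 - η / (4 * (N:ℝ)^2)) ^ (-2 : ℝ))
    (hβ : β = (1 - η / (4 * (N:ℝ)^2)) ^ ((1:ℝ) / (B:ℝ)))
    (k s : ℕ) (hs : 1 ≤ s) (i j : Fin N) :
    |transMat W k s i j - 1 / (N:ℝ)| ≤ γ * β ^ (k - s) := by
  have hN : (1 : ℝ) ≤ N := by exact_mod_cast i.pos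
  set ε := η / (4 * (N : ℝ) ^ 2)
  have hε : 0 < ε ∧ ε < 1 :=
    ⟨div_pos hη.1 (by positivity), by rw [div_lt_one (by positivity)]; nlinarith [hη.2]⟩
  have hW t (ht : s ≤ t) : W t ∈ doublyStochastic ℝ (Fin N) :=
    mem_doublyStochastic_iff_sum.2 (hds t (by omega))
  have hwin n : ∑ a, colDeviation W s j (n + B) a ^ 2 ≤
      (1 - ε) ^ 2 * ∑ a, colDeviation W s j n a ^ 2 := by
    refine (sum_sq_colDeviation_add_le hη.1 hds hmin hdiag hconn hs j n).trans ?_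
    refine mul_le_mul_of_nonneg_right ?_ (sum_nonneg fun a _ => sq_nonneg _)
    have : η / (2 * N ^ 2) = 2 * ε := by ring
    nlinarith [sq_nonneg ε]
  calc |transMat W k s i j - 1 / N| = |colDeviation W s j (k - s) i| := by
        rw [colDeviation_apply hW, ← transMat_eq_add_sub]
    _ ≤ (1 - ε) ^ ((k - s) / B) :=
        abs_le_pow_div_of_window (by linarith) (antitone_sum_sq (fun r => hW (s + r) (by omega))
          (colDeviation_succ j)) hwin (sum_sq_colDeviation_zero_le_one j) _ _
    _ ≤ γ * β ^ (k - s) := hγ ▸ hβ ▸ pow_div_le_rpow_neg_two_mul (by linarith) (by linarith) hB _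

theorem stmt0 {N B : ℕ} (hN : 0 < N) (hB : 0 < B) {η : ℝ} (hη : η ∈ Set.Ioo (0:ℝ) 1)
    (W : ℕ → Matrix (Fin N) (Fin N) ℝ)
    (hds : ∀ t, 1 ≤ t → IsDoublyStochasticMat (W t))
    (hmin : ∀ t, 1 ≤ t → ∀ i j, W t i j ≠ 0 → η ≤ W t i j)
    (hdiag : ∀ t, 1 ≤ t → ∀ i, η ≤ W t i i)
    (hconn : BStronglyConnectedSeq W B)
    (γ β : ℝ)
    (hγ : γ = (1 - η / (4 * (N:ℝ)^2)) ^ (-2 : ℝ))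
    (hβ : β = (1 - η / (4 * (N:ℝ)^2)) ^ ((1:ℝ) / (B:ℝ)))
    (k s : ℕ) (hs : 1 ≤ s) (hks : s ≤ k) (i j : Fin N) :
    |transMat W k s i j - 1 / (N:ℝ)| ≤ γ * β ^ (k - s) :=
  stmt0_general hB hη W hds hmin hdiag hconn γ β hγ hβ k s hs i j
end

section
/- Let {W_t}_{t≥1} be N×N doubly stochastic matrices with every nonzero entry at least η ∈ (0,1), diagonal entries at least η, and a B-strongly connected graph sequence. Let x_{i,t} ∈ ℝ^d satisfy x_{i,t+1} = Σ_{j=1}^N [W_t]_{ij} x_{j,t} + e_{i,t} where ‖e_{i,t}‖ ≤ η_t λ_t for positive scalars η_t, λ_t. Let x̄_t = (1/N)Σ_{i=1}^N x_{i,t} and R₁ = max_i ‖x_{i,1}‖. Then for all i ∈ [N] and t ≥ 1, ‖x_{i,t+1} − x̄_{t+1}‖ ≤ N γ β^t R₁ + N γ Σ_{l=1}^{t} β^{t−l} λ_l η_l, where γ = (1 − η/(4N²))^{−2} and β = (1 − η/(4N²))^{1/B}. -/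
/-!
Write `Y t` for the stack of deviations `x i t - x̄ t`, with the `ℓ²` norm. Double stochasticity
makes every averaging step nonexpansive on stacks, and `Y (t + 1) = W t • Y t + (deviation of e t)`,
the perturbation having norm at most `√N η_t λ_t`. Over each window of `B` steps the unperturbed
averaging contracts mean-zero stacks by `β ^ B = 1 - η / (4 N²)`; comparing with it window by
window gives the geometric sum, and `√N ≤ N`, `(1 - η / (4 N²))⁻¹ ≤ γ` absorb the constants.

The contraction is proved coordinatewise. Sort the initial values as `w 0 ≤ ⋯ ≤ w (N - 1)`. By
connectivity each cut between `w k` and `w (k + 1)` is crossed by an edge during the window, and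
until its first crossing the two sides of the cut stay separated. At that moment the gap
`[w k, w (k + 1)]` lies between the values of two out-neighbours of a single node `u`, so all gaps
charged to `u` are paid for by the term of `u` in the energy drop
`∑ z² - ∑ (W z)² = ∑ᵢ ∑ⱼ Wᵢⱼ (zⱼ - (W z)ᵢ)²`. As `∑ z² ≤ N² / 4 · ∑ gap²` for mean-zero `z`, the
drop is at least `2 η / N² · ∑ z²`.
-/

open Finset

open Matrix

section Averaging

variable {n : Type*} [Fintype n] {A : Matrix n n ℝ} {i : n}

theorem Matrix.mulVec_le_of_forall_le (hnn : ∀ j, 0 ≤ A i j) (hrow : ∑ j, A i j = 1)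
    {z : n → ℝ} {c : ℝ} (hz : ∀ j, 0 < A i j → z j ≤ c) : (A *ᵥ z) i ≤ c := by
  calc (A *ᵥ z) i = ∑ j, A i j * z j := rfl
    _ ≤ ∑ j, A i j * c := by
      refine sum_le_sum fun j _ => ?_
      rcases (hnn j).eq_or_lt with h | h
      · simp [← h]
      · exact mul_le_mul_of_nonneg_left (hz j h) h.le
    _ = c := by rw [← sum_mul, hrow, one_mul]

theorem Matrix.le_mulVec_of_forall_le (hnn : ∀ j, 0 ≤ A i j) (hrow : ∑ j, A i j = 1)
    {z : n → ℝ} {c : ℝ} (hz : ∀ j, 0 < A i j → c ≤ z j) : c ≤ (A *ᵥ z) i := by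
  have := mulVec_le_of_forall_le hnn hrow (z := -z) (c := -c) fun j hj => neg_le_neg (hz j hj)
  rwa [mulVec_neg, Pi.neg_apply, neg_le_neg_iff] at this

theorem mul_sq_sub_le_two_mul_sum (hnn : ∀ j, 0 ≤ A i j) {η : ℝ} (hη : 0 ≤ η) {a b : n}
    (ha : η ≤ A i a) (hb : η ≤ A i b) (z : n → ℝ) (c : ℝ) :
    η * (z a - z b) ^ 2 ≤ 2 * ∑ j, A i j * (z j - c) ^ 2 := by
  classical
  have hterm : ∀ j, 0 ≤ A i j * (z j - c) ^ 2 := fun j => mul_nonneg (hnn j) (sq_nonneg _)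
  obtain rfl | hab := eq_or_ne a b
  · simpa using sum_nonneg fun j _ => hterm j
  have hpair : A i a * (z a - c) ^ 2 + A i b * (z b - c) ^ 2 ≤ ∑ j, A i j * (z j - c) ^ 2 := by
    rw [← sum_pair (f := fun j => A i j * (z j - c) ^ 2) hab]
    exact sum_le_sum_of_subset_of_nonneg (subset_univ _) fun j _ _ => hterm j
  nlinarith [sq_nonneg (z a + z b - 2 * c), mul_le_mul_of_nonneg_right ha (sq_nonneg (z a - c)),
    mul_le_mul_of_nonneg_right hb (sq_nonneg (z b - c))]

end Averaging

theorem sum_sq_sub_sum_sq_mulVec {N : ℕ} {A : Matrix (Fin N) (Fin N) ℝ}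
    (hA : IsDoublyStochasticMat A) (z : Fin N → ℝ) :
    ∑ i, z i ^ 2 - ∑ i, (A *ᵥ z) i ^ 2 = ∑ i, ∑ j, A i j * (z j - (A *ᵥ z) i) ^ 2 := by
  obtain ⟨-, hrow, hcol⟩ := hA
  have hrow_i : ∀ i, ∑ j, A i j * (z j - (A *ᵥ z) i) ^ 2
      = ∑ j, A i j * z j ^ 2 - (A *ᵥ z) i ^ 2 := by
    intro i
    set c := (A *ᵥ z) i
    calc ∑ j, A i j * (z j - c) ^ 2
        = ∑ j, A i j * z j ^ 2 - 2 * c * ∑ j, A i j * z j + c ^ 2 * ∑ j, A i j := by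
          simp only [mul_sum, ← sum_sub_distrib, ← sum_add_distrib]
          exact sum_congr rfl fun j _ => by ring
      _ = ∑ j, A i j * z j ^ 2 - c ^ 2 := by
          rw [hrow, show ∑ j, A i j * z j = c from rfl]
          ring
  simp only [hrow_i, sum_sub_distrib]
  rw [sum_comm]
  simp [← sum_mul, hcol]

theorem Monotone.sum_sub_le {w : ℕ → ℝ} (hw : Monotone w) {F : Finset ℕ} (hF : F.Nonempty) :
    ∑ k ∈ F, (w (k + 1) - w k) ≤ w (F.max' hF + 1) - w (F.min' hF) := by
  calc ∑ k ∈ F, (w (k + 1) - w k)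
      ≤ ∑ k ∈ Ico (F.min' hF) (F.max' hF + 1), (w (k + 1) - w k) :=
        sum_le_sum_of_subset_of_nonneg
          (fun k hk => mem_Ico.2 ⟨F.min'_le k hk, Nat.lt_succ_of_le (F.le_max' k hk)⟩)
          fun k _ _ => sub_nonneg.2 (hw k.le_succ)
    _ = _ := sum_Ico_sub w (Nat.le_succ_of_le (F.min'_le _ (F.max'_mem hF)))

theorem sum_sq_le_of_sum_eq_zero {ι : Type*} [Fintype ι] {y : ι → ℝ} (hy : ∑ i, y i = 0)
    {lo hi : ℝ} (hlo : ∀ i, lo ≤ y i) (hhi : ∀ i, y i ≤ hi) :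
    ∑ i, y i ^ 2 ≤ Fintype.card ι / 4 * (hi - lo) ^ 2 := by
  have hprod : 0 ≤ ∑ i, (y i - lo) * (hi - y i) :=
    sum_nonneg fun i _ => mul_nonneg (sub_nonneg.2 (hlo i)) (sub_nonneg.2 (hhi i))
  have hexp : ∑ i, (y i - lo) * (hi - y i)
      = (lo + hi) * ∑ i, y i - ∑ i, y i ^ 2 - Fintype.card ι * (lo * hi) := by
    have h : ∀ i, (y i - lo) * (hi - y i) = (lo + hi) * y i - y i ^ 2 - lo * hi :=
      fun i => by ring
    simp only [h, sum_sub_distrib, ← mul_sum, sum_const, card_univ, nsmul_eq_mul]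
    ring
  rw [hexp, hy] at hprod
  nlinarith [mul_nonneg (Nat.cast_nonneg (Fintype.card ι) : (0:ℝ) ≤ _) (sq_nonneg (hi + lo))]

theorem exists_monotone_rank {N : ℕ} (hN : 0 < N) (z : Fin N → ℝ) :
    ∃ (r : Fin N → ℕ) (w : ℕ → ℝ), Monotone w ∧ (∀ i, z i = w (r i)) ∧ (∀ i, r i < N) ∧
      ∀ k < N, ∃ i, r i = k := by
  set σ := Tuple.sort z
  refine ⟨fun i => σ.symm i, fun k => z (σ ⟨min k (N - 1), by omega⟩), fun k l hkl => ?_,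
    fun i => ?_, fun i => (σ.symm i).isLt, fun k hk => ⟨σ ⟨k, hk⟩, by simp⟩⟩
  · exact Tuple.monotone_sort z (Fin.mk_le_mk.2 (by omega))
  · have : (⟨min (σ.symm i : ℕ) (N - 1), by omega⟩ : Fin N) = σ.symm i :=
      Fin.ext (min_eq_left (by omega))
    simp [this]

theorem Relation.ReflTransGen.exists_rel_of_not {α : Type*} {R : α → α → Prop} {P : α → Prop}
    {a b : α} (h : Relation.ReflTransGen R a b) (ha : P a) (hb : ¬P b) :
    ∃ x y, R x y ∧ P x ∧ ¬P y := by
  by_contra! hcon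
  refine hb ?_
  clear hb
  induction h with
  | refl => exact ha
  | tail _ hbc ih => exact hcon _ _ hbc ih

theorem mul_sum_sq_sub_le_of_bracket {n : Type*} [Fintype n] {A : Matrix n n ℝ} {i : n}
    (hnn : ∀ j, 0 ≤ A i j) {η : ℝ} (hη : 0 ≤ η) {w : ℕ → ℝ} (hw : Monotone w) {z : n → ℝ}
    (c : ℝ) {F : Finset ℕ}
    (hF : ∀ k ∈ F, ∃ a b, η ≤ A i a ∧ η ≤ A i b ∧ z a ≤ w k ∧ w (k + 1) ≤ z b) :
    η * ∑ k ∈ F, (w (k + 1) - w k) ^ 2 ≤ 2 * ∑ j, A i j * (z j - c) ^ 2 := by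
  rcases F.eq_empty_or_nonempty with rfl | hne
  · simpa using sum_nonneg fun j _ => mul_nonneg (hnn j) (sq_nonneg (z j - c))
  obtain ⟨a, -, ha, -, hza, -⟩ := hF _ (F.min'_mem hne)
  obtain ⟨-, b, -, hb, -, hzb⟩ := hF _ (F.max'_mem hne)
  have hgap : ∀ k ∈ F, 0 ≤ w (k + 1) - w k := fun k _ => sub_nonneg.2 (hw k.le_succ)
  have hsum : ∑ k ∈ F, (w (k + 1) - w k) ≤ z b - z a := by
    linarith [hw.sum_sub_le hne]
  calc η * ∑ k ∈ F, (w (k + 1) - w k) ^ 2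
      ≤ η * (z b - z a) ^ 2 := by
        gcongr
        exact (sum_sq_le_sq_sum_of_nonneg hgap).trans
          (pow_le_pow_left₀ (sum_nonneg hgap) hsum 2)
    _ ≤ 2 * ∑ j, A i j * (z j - c) ^ 2 := mul_sq_sub_le_two_mul_sum hnn hη hb ha z c

def CrossesCut {n : Type*} (A : Matrix n n ℝ) (r : n → ℕ) (k : ℕ) : Prop :=
  ∃ a b, 0 < A a b ∧ ¬(r a ≤ k ↔ r b ≤ k)

section BlockContraction

variable {N B : ℕ} {M : ℕ → Matrix (Fin N) (Fin N) ℝ} {z : ℕ → Fin N → ℝ}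

theorem bounds_of_not_crossesCut (hds : ∀ m < B, IsDoublyStochasticMat (M m))
    (hz : ∀ m < B, z (m + 1) = M m *ᵥ z m) {r : Fin N → ℕ} {w : ℕ → ℝ} (hw : Monotone w)
    (hr : ∀ i, z 0 i = w (r i)) {k : ℕ} :
    ∀ m ≤ B, (∀ m' < m, ¬CrossesCut (M m') r k) →
      (∀ i, r i ≤ k → z m i ≤ w k) ∧ (∀ i, k < r i → w (k + 1) ≤ z m i)
  | 0, _, _ => ⟨fun i hi => (hr i).trans_le (hw hi), fun i hi => (hw hi).trans_eq (hr i).symm⟩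
  | m + 1, hm, hnc => by
    obtain ⟨hlow, hhigh⟩ :=
      bounds_of_not_crossesCut hds hz hw hr m (by omega) fun m' hm' => hnc m' (by omega)
    obtain ⟨hnn, hrow, -⟩ := hds m (by omega)
    have hside : ∀ a b, 0 < M m a b → (r a ≤ k ↔ r b ≤ k) := fun a b hab => by
      by_contra h
      exact hnc m (lt_add_one m) ⟨a, b, hab, h⟩
    rw [hz m (by omega)]
    exact ⟨fun i hi => mulVec_le_of_forall_le (hnn i) (hrow i) fun j hj =>
        hlow j ((hside i j hj).1 hi),
      fun i hi => le_mulVec_of_forall_le (hnn i) (hrow i) fun j hj =>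
        hhigh j (not_le.1 fun hj' => (not_le.2 hi) ((hside i j hj).2 hj'))⟩

theorem exists_bracket_of_crossesCut {η : ℝ} (hds : ∀ m < B, IsDoublyStochasticMat (M m))
    (hmin : ∀ m < B, ∀ i j, M m i j ≠ 0 → η ≤ M m i j) (hdiag : ∀ m < B, ∀ i, η ≤ M m i i)
    (hz : ∀ m < B, z (m + 1) = M m *ᵥ z m) {r : Fin N → ℕ} {w : ℕ → ℝ} (hw : Monotone w)
    (hr : ∀ i, z 0 i = w (r i)) {k : ℕ} (hk : ∃ m < B, CrossesCut (M m) r k) :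
    ∃ m < B, ∃ u a b, η ≤ M m u a ∧ η ≤ M m u b ∧ z m a ≤ w k ∧ w (k + 1) ≤ z m b := by
  classical
  obtain ⟨hm, u, s, hus, hsep⟩ := Nat.find_spec hk
  obtain ⟨hlow, hhigh⟩ := bounds_of_not_crossesCut hds hz hw hr _ hm.le fun m' hm' hc =>
    Nat.find_min hk hm' ⟨hm'.trans hm, hc⟩
  have hu := hdiag _ hm u
  have hs := hmin _ hm _ _ hus.ne'
  refine ⟨Nat.find hk, hm, u, ?_⟩
  by_cases hrk : r u ≤ k
  · exact ⟨u, s, hu, hs, hlow _ hrk, hhigh _ (not_le.1 fun h => hsep (iff_of_true hrk h))⟩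
  · exact ⟨s, u, hs, hu, hlow _ (not_lt.1 fun h => hsep (iff_of_false hrk h.not_ge)),
      hhigh _ (not_le.1 hrk)⟩

theorem mul_sum_gap_sq_le (hN : 0 < N) {η : ℝ} (hη : 0 ≤ η)
    (hds : ∀ m < B, IsDoublyStochasticMat (M m))
    (hmin : ∀ m < B, ∀ i j, M m i j ≠ 0 → η ≤ M m i j) (hdiag : ∀ m < B, ∀ i, η ≤ M m i i)
    (hz : ∀ m < B, z (m + 1) = M m *ᵥ z m) {r : Fin N → ℕ} {w : ℕ → ℝ} (hw : Monotone w)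
    (hr : ∀ i, z 0 i = w (r i)) (hcross : ∀ k, k + 1 < N → ∃ m < B, CrossesCut (M m) r k) :
    η * ∑ k ∈ range (N - 1), (w (k + 1) - w k) ^ 2 ≤ 2 * (∑ i, z 0 i ^ 2 - ∑ i, z B i ^ 2) := by
  classical
  -- Stated for every `k`, so that `choose` produces total functions `fc` and `u`.
  have hex : ∀ k, ∃ (m : ℕ) (u : Fin N), k + 1 < N → m < B ∧
      ∃ a b, η ≤ M m u a ∧ η ≤ M m u b ∧ z m a ≤ w k ∧ w (k + 1) ≤ z m b := fun k => by
    by_cases hk : k + 1 < N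
    · obtain ⟨m, hm, u, hab⟩ := exists_bracket_of_crossesCut hds hmin hdiag hz hw hr (hcross k hk)
      exact ⟨m, u, fun _ => ⟨hm, hab⟩⟩
    · exact ⟨0, ⟨0, hN⟩, fun h => absurd h hk⟩
  choose fc u hfc using hex
  have hkN : ∀ k ∈ range (N - 1), k + 1 < N := fun k hk => by rw [mem_range] at hk; omega
  have hmaps : ∀ k ∈ range (N - 1), (fc k, u k) ∈ range B ×ˢ (univ : Finset (Fin N)) :=
    fun k hk' => mem_product.2 ⟨mem_range.2 (hfc k (hkN k hk')).1, mem_univ _⟩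
  calc η * ∑ k ∈ range (N - 1), (w (k + 1) - w k) ^ 2
      = ∑ p ∈ range B ×ˢ univ,
          η * ∑ k ∈ range (N - 1) with (fc k, u k) = p, (w (k + 1) - w k) ^ 2 := by
        rw [← mul_sum, sum_fiberwise_of_maps_to hmaps]
    _ ≤ ∑ p ∈ range B ×ˢ univ, 2 * ∑ j, M p.1 p.2 j * (z p.1 j - z (p.1 + 1) p.2) ^ 2 := by
        refine sum_le_sum fun p hp => mul_sum_sq_sub_le_of_bracket
          ((hds p.1 (mem_range.1 (mem_product.1 hp).1)).1 p.2) hη hw _ fun k hk => ?_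
        obtain ⟨hk', rfl⟩ := mem_filter.1 hk
        exact (hfc k (hkN k hk')).2
    _ = 2 * ∑ m ∈ range B, (∑ i, z m i ^ 2 - ∑ i, z (m + 1) i ^ 2) := by
        rw [sum_product, mul_sum]
        refine sum_congr rfl fun m hm => ?_
        dsimp only
        rw [← mul_sum, hz m (mem_range.1 hm), sum_sq_sub_sum_sq_mulVec (hds m (mem_range.1 hm))]
    _ = 2 * (∑ i, z 0 i ^ 2 - ∑ i, z B i ^ 2) := by rw [sum_range_sub']

theorem sum_sq_le_of_block_connected (hN : 0 < N) {η : ℝ} (hη : 0 ≤ η)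
    (hds : ∀ m < B, IsDoublyStochasticMat (M m))
    (hmin : ∀ m < B, ∀ i j, M m i j ≠ 0 → η ≤ M m i j) (hdiag : ∀ m < B, ∀ i, η ≤ M m i i)
    (hconn : ∀ i j, Relation.ReflTransGen (fun a b => ∃ l, l < B ∧ 0 < M l a b) i j)
    (hz : ∀ m < B, z (m + 1) = M m *ᵥ z m) (hmean : ∑ i, z 0 i = 0) :
    ∑ i, z B i ^ 2 ≤ (1 - 2 * η / N ^ 2) * ∑ i, z 0 i ^ 2 := by
  obtain ⟨r, w, hw, hr, hrN, hsurj⟩ := exists_monotone_rank hN (z 0)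
  have hcross : ∀ k, k + 1 < N → ∃ m < B, CrossesCut (M m) r k := by
    intro k hk
    obtain ⟨a, ha⟩ := hsurj 0 hN
    obtain ⟨b, hb⟩ := hsurj (N - 1) (by omega)
    obtain ⟨x, y, ⟨m, hm, hxy⟩, hx, hy⟩ :=
      (hconn a b).exists_rel_of_not (P := fun i => r i ≤ k) (by omega) (by omega)
    exact ⟨m, hm, x, y, hxy, fun h => hy (h.1 hx)⟩
  have hcharge := mul_sum_gap_sq_le hN hη hds hmin hdiag hz hw hr hcross
  have hspread : ∑ i, z 0 i ^ 2 ≤ N / 4 * (w (N - 1) - w 0) ^ 2 := by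
    simpa using sum_sq_le_of_sum_eq_zero hmean (fun i => (hw (Nat.zero_le _)).trans_eq (hr i).symm)
      fun i => (hr i).trans_le (hw (by have := hrN i; omega))
  have hrange : (w (N - 1) - w 0) ^ 2 ≤ N * ∑ k ∈ range (N - 1), (w (k + 1) - w k) ^ 2 := by
    rw [← sum_range_sub w]
    refine sq_sum_le_card_mul_sum_sq.trans (mul_le_mul_of_nonneg_right ?_ (by positivity))
    simp
  have hN2 : (0 : ℝ) < N ^ 2 := by positivity
  have hdrop : 2 * η / N ^ 2 * ∑ i, z 0 i ^ 2 ≤ ∑ i, z 0 i ^ 2 - ∑ i, z B i ^ 2 := by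
    rw [div_mul_eq_mul_div, div_le_iff₀ hN2]
    nlinarith [mul_le_mul_of_nonneg_left hspread hη,
      mul_le_mul_of_nonneg_left hrange (by positivity : (0 : ℝ) ≤ η * N / 4)]
  linarith

end BlockContraction

abbrev Stack (N : ℕ) (E : Type*) := PiLp 2 fun _ : Fin N => E

section Stack

variable {N : ℕ} {E : Type*}

def Matrix.mulStack [AddCommGroup E] [Module ℝ E] (A : Matrix (Fin N) (Fin N) ℝ) (v : Stack N E) :
    Stack N E :=
  WithLp.toLp 2 fun i => ∑ j, A i j • v j

@[simp]
theorem Matrix.mulStack_apply [AddCommGroup E] [Module ℝ E] (A : Matrix (Fin N) (Fin N) ℝ)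
    (v : Stack N E) (i : Fin N) : A.mulStack v i = ∑ j, A i j • v j :=
  rfl

variable [NormedAddCommGroup E] [NormedSpace ℝ E]

theorem Matrix.mulStack_sub (A : Matrix (Fin N) (Fin N) ℝ) (v w : Stack N E) :
    A.mulStack (v - w) = A.mulStack v - A.mulStack w := by
  ext i
  simp only [mulStack_apply, PiLp.sub_apply, smul_sub, sum_sub_distrib]

theorem Matrix.norm_mulStack_le {A : Matrix (Fin N) (Fin N) ℝ} (hA : IsDoublyStochasticMat A)
    (v : Stack N E) : ‖A.mulStack v‖ ≤ ‖v‖ := by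
  obtain ⟨hnn, hrow, hcol⟩ := hA
  have hjensen : ∀ i, ‖∑ j, A i j • v j‖ ^ 2 ≤ ∑ j, A i j * ‖v j‖ ^ 2 := fun i => by
    simpa using ((convexOn_norm convex_univ).pow (fun _ _ => norm_nonneg _) 2).map_sum_le
      (fun j _ => hnn i j) (hrow i) fun j _ => Set.mem_univ (v j)
  refine (pow_le_pow_iff_left₀ (norm_nonneg _) (norm_nonneg _) two_ne_zero).1 ?_
  rw [PiLp.norm_sq_eq_of_L2, PiLp.norm_sq_eq_of_L2]
  calc ∑ i, ‖(A.mulStack v) i‖ ^ 2 ≤ ∑ i, ∑ j, A i j * ‖v j‖ ^ 2 := sum_le_sum fun i _ => hjensen i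
    _ = ∑ j, ‖v j‖ ^ 2 := by
      rw [sum_comm]
      simp [← sum_mul, hcol]

theorem Matrix.lipschitzWith_mulStack {A : Matrix (Fin N) (Fin N) ℝ}
    (hA : IsDoublyStochasticMat A) : LipschitzWith 1 (A.mulStack : Stack N E → Stack N E) :=
  LipschitzWith.of_dist_le_mul fun v w => by
    simpa [dist_eq_norm, ← Matrix.mulStack_sub] using Matrix.norm_mulStack_le hA (v - w)

end Stack

theorem norm_sq_stack_eq {N : ℕ} {ι : Type*} [Fintype ι] (v : Stack N (EuclideanSpace ℝ ι)) :
    ‖v‖ ^ 2 = ∑ k, ∑ i, v i k ^ 2 := by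
  rw [PiLp.norm_sq_eq_of_L2, sum_comm]
  refine sum_congr rfl fun i _ => ?_
  rw [EuclideanSpace.norm_sq_eq]
  simp only [Real.norm_eq_abs, sq_abs]

theorem norm_le_of_block_connected {N B : ℕ} {M : ℕ → Matrix (Fin N) (Fin N) ℝ} {ι : Type*}
    [Fintype ι] (hN : 0 < N) {η : ℝ} (hη0 : 0 ≤ η) (hη1 : η ≤ 1)
    (hds : ∀ m < B, IsDoublyStochasticMat (M m))
    (hmin : ∀ m < B, ∀ i j, M m i j ≠ 0 → η ≤ M m i j) (hdiag : ∀ m < B, ∀ i, η ≤ M m i i)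
    (hconn : ∀ i j, Relation.ReflTransGen (fun a b => ∃ l, l < B ∧ 0 < M l a b) i j)
    {y : ℕ → Stack N (EuclideanSpace ℝ ι)} (hy : ∀ m < B, y (m + 1) = (M m).mulStack (y m))
    (hmean : ∑ i, y 0 i = 0) :
    ‖y B‖ ≤ (1 - η / (4 * N ^ 2)) * ‖y 0‖ := by
  have hsq : ‖y B‖ ^ 2 ≤ (1 - 2 * η / N ^ 2) * ‖y 0‖ ^ 2 := by
    rw [norm_sq_stack_eq, norm_sq_stack_eq, mul_sum]
    refine sum_le_sum fun k _ => sum_sq_le_of_block_connected (z := fun m i => y m i k) hN hη0 hds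
      hmin hdiag hconn (fun m hm => funext fun i => ?_) ?_
    · simp [hy m hm, mulVec, dotProduct]
    · simpa using congr($hmean k)
  have hN1 : (1 : ℝ) ≤ N := by exact_mod_cast hN
  have hδ : 0 ≤ η / (4 * N ^ 2) := by positivity
  have hδ1 : η / (4 * N ^ 2) ≤ 1 := by
    rw [div_le_one (by positivity)]
    nlinarith
  have hfac : 1 - 2 * η / N ^ 2 ≤ (1 - η / (4 * N ^ 2)) ^ 2 := by
    have : 2 * η / N ^ 2 = 8 * (η / (4 * N ^ 2)) := by field_simp; ring
    nlinarith
  refine (pow_le_pow_iff_left₀ (norm_nonneg _) (by nlinarith [norm_nonneg (y 0)]) two_ne_zero).1 ?_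
  calc ‖y B‖ ^ 2 ≤ (1 - 2 * η / N ^ 2) * ‖y 0‖ ^ 2 := hsq
    _ ≤ (1 - η / (4 * N ^ 2)) ^ 2 * ‖y 0‖ ^ 2 := by gcongr
    _ = ((1 - η / (4 * N ^ 2)) * ‖y 0‖) ^ 2 := by ring

def evolve {X : Type*} (T : ℕ → X → X) (s : ℕ) (v : X) : ℕ → X
  | 0 => v
  | n + 1 => T (s + n) (evolve T s v n)

section Evolve

variable {E : Type*} [SeminormedAddCommGroup E] {T : ℕ → E → E} {s : ℕ}

theorem norm_evolve_le (hT : ∀ m, s ≤ m → ∀ v, ‖T m v‖ ≤ ‖v‖) (v : E) :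
    ∀ n, ‖evolve T s v n‖ ≤ ‖v‖
  | 0 => le_rfl
  | n + 1 => (hT (s + n) (Nat.le_add_right s n) _).trans (norm_evolve_le hT v n)

theorem norm_sub_evolve_le (hT : ∀ m, s ≤ m → LipschitzWith 1 (T m)) {p ξ : ℕ → E}
    (hp : ∀ m, s ≤ m → p (m + 1) = T m (p m) + ξ m) :
    ∀ n, ‖p (s + n) - evolve T s (p s) n‖ ≤ ∑ l ∈ Ico s (s + n), ‖ξ l‖
  | 0 => by simp [evolve]
  | n + 1 => by
    have hlip : ‖T (s + n) (p (s + n)) - T (s + n) (evolve T s (p s) n)‖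
        ≤ ‖p (s + n) - evolve T s (p s) n‖ := by
      simpa [dist_eq_norm] using (hT (s + n) (Nat.le_add_right s n)).dist_le_mul
        (p (s + n)) (evolve T s (p s) n)
    rw [← add_assoc, hp (s + n) (Nat.le_add_right s n), sum_Ico_succ_top (Nat.le_add_right s n)]
    calc ‖T (s + n) (p (s + n)) + ξ (s + n) - evolve T s (p s) (n + 1)‖
        ≤ ‖T (s + n) (p (s + n)) - T (s + n) (evolve T s (p s) n)‖ + ‖ξ (s + n)‖ := by
          rw [add_sub_right_comm]
          exact norm_add_le _ _
      _ ≤ ∑ l ∈ Ico s (s + n), ‖ξ l‖ + ‖ξ (s + n)‖ := by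
          gcongr
          exact hlip.trans (norm_sub_evolve_le hT hp n)

end Evolve

theorem pow_mul_sum_Ico_le {c : ℕ → ℝ} {ρ : ℝ} {B s n : ℕ} (hρ0 : 0 ≤ ρ) (hρ1 : ρ ≤ 1)
    (hc : ∀ l ∈ Ico s n, 0 ≤ c l) (hn : n ≤ s + B) :
    ρ ^ B * ∑ l ∈ Ico s n, c l ≤ ∑ l ∈ Ico s n, ρ ^ (n - 1 - l) * c l := by
  rw [mul_sum]
  exact sum_le_sum fun l hl => mul_le_mul_of_nonneg_right
    (pow_le_pow_of_le_one hρ0 hρ1 (by have := (mem_Ico.1 hl).1; omega)) (hc l hl)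

theorem pow_mul_le_of_block {a c : ℕ → ℝ} {ρ : ℝ} {B t₀ : ℕ} (hB : 0 < B) (hρ0 : 0 ≤ ρ)
    (hρ1 : ρ ≤ 1) (ha : 0 ≤ a t₀) (hc : ∀ l, t₀ ≤ l → 0 ≤ c l)
    (hshort : ∀ n < B, a (t₀ + n) ≤ a t₀ + ∑ l ∈ Ico t₀ (t₀ + n), c l)
    (hblock : ∀ s, t₀ ≤ s → a (s + B) ≤ ρ ^ B * a s + ∑ l ∈ Ico s (s + B), c l) (n : ℕ) :
    ρ ^ B * a (t₀ + n) ≤ ρ ^ n * a t₀ + ∑ l ∈ Ico t₀ (t₀ + n), ρ ^ (t₀ + n - 1 - l) * c l := by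
  induction n using Nat.strong_induction_on with
  | _ n ih =>
  have hcI : ∀ s, t₀ ≤ s → ∀ l ∈ Ico s (t₀ + n), 0 ≤ c l :=
    fun s hs l hl => hc l (hs.trans (mem_Ico.1 hl).1)
  by_cases hn : n < B
  · calc ρ ^ B * a (t₀ + n) ≤ ρ ^ B * a t₀ + ρ ^ B * ∑ l ∈ Ico t₀ (t₀ + n), c l := by
          rw [← mul_add]
          exact mul_le_mul_of_nonneg_left (hshort n hn) (pow_nonneg hρ0 B)
      _ ≤ _ := add_le_add (mul_le_mul_of_nonneg_right (pow_le_pow_of_le_one hρ0 hρ1 hn.le) ha)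
          (pow_mul_sum_Ico_le hρ0 hρ1 (hcI t₀ le_rfl) (by omega))
  obtain ⟨m, rfl⟩ : ∃ m, n = m + B := ⟨n - B, by omega⟩
  rw [← sum_Ico_consecutive _ (Nat.le_add_right t₀ m) (by omega : t₀ + m ≤ t₀ + (m + B))]
  calc ρ ^ B * a (t₀ + (m + B))
      ≤ ρ ^ B * (ρ ^ B * a (t₀ + m)) + ρ ^ B * ∑ l ∈ Ico (t₀ + m) (t₀ + (m + B)), c l := by
        rw [← mul_add, ← add_assoc]
        exact mul_le_mul_of_nonneg_left (hblock _ (Nat.le_add_right t₀ m)) (pow_nonneg hρ0 B)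
    _ ≤ ρ ^ B * (ρ ^ m * a t₀ + ∑ l ∈ Ico t₀ (t₀ + m), ρ ^ (t₀ + m - 1 - l) * c l)
        + ∑ l ∈ Ico (t₀ + m) (t₀ + (m + B)), ρ ^ (t₀ + (m + B) - 1 - l) * c l := by
        gcongr ?_ + ?_
        · exact mul_le_mul_of_nonneg_left (ih m (by omega)) (pow_nonneg hρ0 B)
        · exact pow_mul_sum_Ico_le hρ0 hρ1 (hcI _ (Nat.le_add_right t₀ m)) (by omega)
    _ = _ := by
        rw [mul_add, mul_sum, ← mul_assoc, ← pow_add, add_comm B m, add_assoc]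
        congr 2
        refine sum_congr rfl fun l hl => ?_
        rw [← mul_assoc, ← pow_add]
        congr 2
        have := mem_Ico.1 hl
        omega

section Deviation

variable {N : ℕ} {E : Type*} [NormedAddCommGroup E] [InnerProductSpace ℝ E]

noncomputable def deviation (v : Fin N → E) : Stack N E :=
  WithLp.toLp 2 fun i => v i - (N : ℝ)⁻¹ • ∑ j, v j

@[simp]
theorem deviation_apply (v : Fin N → E) (i : Fin N) :
    deviation v i = v i - (N : ℝ)⁻¹ • ∑ j, v j :=
  rfl

theorem sum_deviation (hN : 0 < N) (v : Fin N → E) : ∑ i, deviation v i = 0 := by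
  simp [sum_sub_distrib, ← Nat.cast_smul_eq_nsmul ℝ, smul_smul,
    mul_inv_cancel₀ (Nat.cast_ne_zero.2 hN.ne' : (N : ℝ) ≠ 0)]

theorem deviation_mulStack_add {A : Matrix (Fin N) (Fin N) ℝ} (hA : IsDoublyStochasticMat A)
    (v e : Fin N → E) :
    deviation (fun i => ∑ j, A i j • v j + e i) = A.mulStack (deviation v) + deviation e := by
  obtain ⟨-, hrow, hcol⟩ := hA
  have hmix : ∑ i, ∑ j, A i j • v j = ∑ j, v j := by
    rw [sum_comm]
    simp [← sum_smul, hcol]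
  ext i
  simp only [deviation_apply, PiLp.add_apply, Matrix.mulStack_apply, smul_sub, sum_sub_distrib,
    ← sum_smul, hrow, one_smul, sum_add_distrib, hmix, smul_add]
  abel

theorem sum_norm_deviation_sq_le (hN : 0 < N) (v : Fin N → E) :
    ∑ i, ‖deviation v i‖ ^ 2 ≤ ∑ i, ‖v i‖ ^ 2 := by
  set μ : E := (N : ℝ)⁻¹ • ∑ j, v j
  have hsum : ∑ j, v j = (N : ℝ) • μ := by
    rw [smul_smul, mul_inv_cancel₀ (Nat.cast_ne_zero.2 hN.ne'), one_smul]
  have hdev : ∀ i, deviation v i = v i - μ := fun i => rfl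
  clear_value μ
  have hexp : ∑ i, ‖deviation v i‖ ^ 2 = ∑ i, ‖v i‖ ^ 2 - N * ‖μ‖ ^ 2 := by
    simp only [hdev, norm_sub_sq_real, sum_add_distrib, sum_sub_distrib, ← mul_sum,
      ← sum_inner, hsum, real_inner_smul_left, real_inner_self_eq_norm_sq, sum_const, card_univ,
      Fintype.card_fin, nsmul_eq_mul]
    ring
  rw [hexp]
  have : 0 ≤ (N : ℝ) * ‖μ‖ ^ 2 := by positivity
  linarith

theorem norm_deviation_le (hN : 0 < N) {v : Fin N → E} {C : ℝ} (hC : ∀ i, ‖v i‖ ≤ C) :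
    ‖deviation v‖ ≤ √N * C := by
  have hC0 : 0 ≤ C := (norm_nonneg _).trans (hC ⟨0, hN⟩)
  refine (pow_le_pow_iff_left₀ (norm_nonneg _) (by positivity) two_ne_zero).1 ?_
  rw [PiLp.norm_sq_eq_of_L2, mul_pow, Real.sq_sqrt (Nat.cast_nonneg N)]
  calc ∑ i, ‖deviation v i‖ ^ 2 ≤ ∑ i, ‖v i‖ ^ 2 := sum_norm_deviation_sq_le hN v
    _ ≤ ∑ _i : Fin N, C ^ 2 := sum_le_sum fun i _ => pow_le_pow_left₀ (norm_nonneg _) (hC i) 2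
    _ = N * C ^ 2 := by simp

end Deviation

section Consensus

variable {N B : ℕ} {ι : Type*} [Fintype ι] {W : ℕ → Matrix (Fin N) (Fin N) ℝ}
  {x e : ℕ → Fin N → EuclideanSpace ℝ ι} {C : ℕ → ℝ}

theorem norm_deviation_le_evolve_add (hN : 0 < N)
    (hds : ∀ t, 1 ≤ t → IsDoublyStochasticMat (W t))
    (hrec : ∀ t, 1 ≤ t → ∀ i, x (t + 1) i = (∑ j, W t i j • x t j) + e t i)
    (he : ∀ t, 1 ≤ t → ∀ i, ‖e t i‖ ≤ C t) {s : ℕ} (hs : 1 ≤ s) (n : ℕ) :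
    ‖deviation (x (s + n))‖ ≤ ‖evolve (fun m => (W m).mulStack) s (deviation (x s)) n‖
      + ∑ l ∈ Ico s (s + n), √N * C l := by
  have hY : ∀ m, s ≤ m →
      deviation (x (m + 1)) = (W m).mulStack (deviation (x m)) + deviation (e m) := fun m hm => by
    rw [show x (m + 1) = fun i => ∑ j, W m i j • x m j + e m i from funext (hrec m (hs.trans hm))]
    exact deviation_mulStack_add (hds m (hs.trans hm)) _ _
  refine (norm_le_insert' _ _).trans (add_le_add le_rfl ?_)
  refine (norm_sub_evolve_le (p := fun m => deviation (x m)) (ξ := fun m => deviation (e m))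
    (fun m hm => Matrix.lipschitzWith_mulStack (hds m (hs.trans hm))) hY n).trans
    (sum_le_sum fun l hl => ?_)
  exact norm_deviation_le hN (he l (hs.trans (mem_Ico.1 hl).1))

theorem norm_deviation_le_add (hN : 0 < N) (hds : ∀ t, 1 ≤ t → IsDoublyStochasticMat (W t))
    (hrec : ∀ t, 1 ≤ t → ∀ i, x (t + 1) i = (∑ j, W t i j • x t j) + e t i)
    (he : ∀ t, 1 ≤ t → ∀ i, ‖e t i‖ ≤ C t) (n : ℕ) :
    ‖deviation (x (1 + n))‖ ≤ ‖deviation (x 1)‖ + ∑ l ∈ Ico 1 (1 + n), √N * C l :=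
  (norm_deviation_le_evolve_add hN hds hrec he le_rfl n).trans <| add_le_add
    (norm_evolve_le (fun m hm v => Matrix.norm_mulStack_le (hds m hm) v) _ n) le_rfl

theorem norm_deviation_le_block (hN : 0 < N) {η : ℝ} (hη0 : 0 ≤ η) (hη1 : η ≤ 1)
    (hds : ∀ t, 1 ≤ t → IsDoublyStochasticMat (W t))
    (hmin : ∀ t, 1 ≤ t → ∀ i j, W t i j ≠ 0 → η ≤ W t i j)
    (hdiag : ∀ t, 1 ≤ t → ∀ i, η ≤ W t i i) (hconn : BStronglyConnectedSeq W B)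
    (hrec : ∀ t, 1 ≤ t → ∀ i, x (t + 1) i = (∑ j, W t i j • x t j) + e t i)
    (he : ∀ t, 1 ≤ t → ∀ i, ‖e t i‖ ≤ C t) {s : ℕ} (hs : 1 ≤ s) :
    ‖deviation (x (s + B))‖
      ≤ (1 - η / (4 * N ^ 2)) * ‖deviation (x s)‖ + ∑ l ∈ Ico s (s + B), √N * C l := by
  have hsm : ∀ m, 1 ≤ s + m := fun m => hs.trans (Nat.le_add_right s m)
  refine (norm_deviation_le_evolve_add hN hds hrec he hs B).trans (add_le_add ?_ le_rfl)
  exact norm_le_of_block_connected hN hη0 hη1 (M := fun m => W (s + m))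
    (fun m _ => hds _ (hsm m)) (fun m _ => hmin _ (hsm m)) (fun m _ => hdiag _ (hsm m))
    (hconn s hs) (fun m _ => rfl) (sum_deviation hN _)

theorem pow_mul_norm_deviation_le (hN : 0 < N) (hB : 0 < B) {η : ℝ} (hη0 : 0 ≤ η) (hη1 : η ≤ 1)
    (hds : ∀ t, 1 ≤ t → IsDoublyStochasticMat (W t))
    (hmin : ∀ t, 1 ≤ t → ∀ i j, W t i j ≠ 0 → η ≤ W t i j)
    (hdiag : ∀ t, 1 ≤ t → ∀ i, η ≤ W t i i) (hconn : BStronglyConnectedSeq W B)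
    (hrec : ∀ t, 1 ≤ t → ∀ i, x (t + 1) i = (∑ j, W t i j • x t j) + e t i)
    (he : ∀ t, 1 ≤ t → ∀ i, ‖e t i‖ ≤ C t) {R : ℝ} (hR : ∀ i, ‖x 1 i‖ ≤ R)
    {ρ : ℝ} (hρ0 : 0 ≤ ρ) (hρB : ρ ^ B = 1 - η / (4 * N ^ 2)) (t : ℕ) :
    ρ ^ B * ‖deviation (x (t + 1))‖ ≤ √N * (ρ ^ t * R + ∑ l ∈ Icc 1 t, ρ ^ (t - l) * C l) := by
  have hρ1 : ρ ≤ 1 := (pow_le_one_iff_of_nonneg hρ0 hB.ne').1 <| by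
    rw [hρB]
    linarith [show 0 ≤ η / (4 * N ^ 2) by positivity]
  have hC : ∀ l, 1 ≤ l → 0 ≤ √N * C l := fun l hl =>
    mul_nonneg (Real.sqrt_nonneg _) ((norm_nonneg (e l ⟨0, hN⟩)).trans (he l hl _))
  have key := pow_mul_le_of_block (a := fun s => ‖deviation (x s)‖) hB hρ0 hρ1 (norm_nonneg _) hC
    (fun n _ => norm_deviation_le_add hN hds hrec he n)
    (fun s hs => hρB ▸ norm_deviation_le_block hN hη0 hη1 hds hmin hdiag hconn hrec he hs) t
  simp only [add_comm 1 t, Ico_add_one_right_eq_Icc, Nat.add_sub_cancel] at key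
  refine key.trans ?_
  rw [mul_add, mul_sum]
  gcongr ?_ + ∑ l ∈ Icc 1 t, ?_ with l hl
  · rw [mul_left_comm]
    exact mul_le_mul_of_nonneg_left (norm_deviation_le hN hR) (pow_nonneg hρ0 t)
  · exact (mul_left_comm _ _ _).le

end Consensus

theorem stmt1_general {N B d : ℕ} (hN : 0 < N) (hB : 0 < B) {η : ℝ} (hη : η ∈ Set.Ioo (0:ℝ) 1)
    (W : ℕ → Matrix (Fin N) (Fin N) ℝ)
    (hds : ∀ t, 1 ≤ t → IsDoublyStochasticMat (W t))
    (hmin : ∀ t, 1 ≤ t → ∀ i j, W t i j ≠ 0 → η ≤ W t i j)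
    (hdiag : ∀ t, 1 ≤ t → ∀ i, η ≤ W t i i)
    (hconn : BStronglyConnectedSeq W B)
    (γ β : ℝ)
    (hγ : γ = (1 - η / (4 * (N:ℝ)^2)) ^ (-2 : ℝ))
    (hβ : β = (1 - η / (4 * (N:ℝ)^2)) ^ ((1:ℝ) / (B:ℝ)))
    (ηs lam : ℕ → ℝ)
    (hηs : ∀ t, 1 ≤ t → 0 < ηs t) (hlam : ∀ t, 1 ≤ t → 0 < lam t)
    (x e : ℕ → Fin N → EuclideanSpace ℝ (Fin d))
    (hrec : ∀ t, 1 ≤ t → ∀ i, x (t+1) i = (∑ j, W t i j • x t j) + e t i)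
    (he : ∀ t, 1 ≤ t → ∀ i, ‖e t i‖ ≤ ηs t * lam t)
    (xbar : ℕ → EuclideanSpace ℝ (Fin d))
    (hxbar : ∀ t, xbar t = (N:ℝ)⁻¹ • ∑ i, x t i)
    (R1 : ℝ)
    (hR1 : R1 = Finset.univ.sup' ⟨⟨0, hN⟩, Finset.mem_univ _⟩ fun i => ‖x 1 i‖)
    (i : Fin N) (t : ℕ) :
    ‖x (t+1) i - xbar (t+1)‖ ≤
      N * γ * β ^ t * R1 + N * γ * ∑ l ∈ Finset.Icc 1 t, β ^ (t - l) * lam l * ηs l := by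
  obtain ⟨hη0, hη1⟩ := hη
  set δ := η / (4 * (N : ℝ) ^ 2)
  have hN1 : (1 : ℝ) ≤ N := by exact_mod_cast hN
  have hδ : 0 < δ := by positivity
  have hδ1 : δ < 1 := (div_lt_one (by positivity)).2 (by nlinarith)
  have hβ0 : 0 ≤ β := hβ ▸ Real.rpow_nonneg (by linarith) _
  have hβB : β ^ B = 1 - δ := by rw [hβ, one_div, Real.rpow_inv_natCast_pow (by linarith) hB.ne']
  have hγK : γ = (1 - δ)⁻¹ ^ 2 := by
    rw [hγ, show (-2 : ℝ) = -((2 : ℕ) : ℝ) by norm_num, Real.rpow_neg (by linarith),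
      Real.rpow_natCast, inv_pow]
  have hR : ∀ j, ‖x 1 j‖ ≤ R1 := fun j => hR1 ▸ le_sup' (fun i => ‖x 1 i‖) (mem_univ j)
  set S := β ^ t * R1 + ∑ l ∈ Icc 1 t, β ^ (t - l) * (lam l * ηs l)
  have hS : 0 ≤ S := add_nonneg (mul_nonneg (pow_nonneg hβ0 t) ((norm_nonneg _).trans (hR i)))
    (sum_nonneg fun l hl => have hl1 := (mem_Icc.1 hl).1
      mul_nonneg (pow_nonneg hβ0 _) (mul_pos (hlam l hl1) (hηs l hl1)).le)
  have hdev : (1 - δ) * ‖deviation (x (t + 1))‖ ≤ √N * S := hβB ▸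
    pow_mul_norm_deviation_le hN hB hη0.le hη1.le hds hmin hdiag hconn hrec
      (fun t ht i => (he t ht i).trans_eq (mul_comm _ _)) hR hβ0 hβB t
  have hpt : ‖x (t + 1) i - xbar (t + 1)‖ ≤ ‖deviation (x (t + 1))‖ := by
    simpa [hxbar] using PiLp.norm_apply_le (deviation (x (t + 1))) i
  calc ‖x (t + 1) i - xbar (t + 1)‖ ≤ (1 - δ)⁻¹ * (√N * S) := by
        rw [le_inv_mul_iff₀ (by linarith)]
        exact (mul_le_mul_of_nonneg_left hpt (by linarith)).trans hdev
    _ ≤ (1 - δ)⁻¹ ^ 2 * (N * S) := by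
        gcongr
        · exact le_self_pow₀ (one_le_inv₀ (by linarith) |>.2 (by linarith)) two_ne_zero
        · exact Real.sqrt_le_iff.2 ⟨by linarith, by nlinarith⟩
    _ = _ := by
        rw [← hγK]
        simp only [S, mul_add, mul_sum]
        ring_nf

theorem stmt1 {N B d : ℕ} (hN : 0 < N) (hB : 0 < B) {η : ℝ} (hη : η ∈ Set.Ioo (0:ℝ) 1)
    (W : ℕ → Matrix (Fin N) (Fin N) ℝ)
    (hds : ∀ t, 1 ≤ t → IsDoublyStochasticMat (W t))
    (hmin : ∀ t, 1 ≤ t → ∀ i j, W t i j ≠ 0 → η ≤ W t i j)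
    (hdiag : ∀ t, 1 ≤ t → ∀ i, η ≤ W t i i)
    (hconn : BStronglyConnectedSeq W B)
    (γ β : ℝ)
    (hγ : γ = (1 - η / (4 * (N:ℝ)^2)) ^ (-2 : ℝ))
    (hβ : β = (1 - η / (4 * (N:ℝ)^2)) ^ ((1:ℝ) / (B:ℝ)))
    (ηs lam : ℕ → ℝ)
    (hηs : ∀ t, 1 ≤ t → 0 < ηs t) (hlam : ∀ t, 1 ≤ t → 0 < lam t)
    (x e : ℕ → Fin N → EuclideanSpace ℝ (Fin d))
    (hrec : ∀ t, 1 ≤ t → ∀ i, x (t+1) i = (∑ j, W t i j • x t j) + e t i)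
    (he : ∀ t, 1 ≤ t → ∀ i, ‖e t i‖ ≤ ηs t * lam t)
    (xbar : ℕ → EuclideanSpace ℝ (Fin d))
    (hxbar : ∀ t, xbar t = (N:ℝ)⁻¹ • ∑ i, x t i)
    (R1 : ℝ)
    (hR1 : R1 = Finset.univ.sup' ⟨⟨0, hN⟩, Finset.mem_univ _⟩ fun i => ‖x 1 i‖)
    (i : Fin N) (t : ℕ) (ht : 1 ≤ t) :
    ‖x (t+1) i - xbar (t+1)‖ ≤
      N * γ * β ^ t * R1 + N * γ * ∑ l ∈ Finset.Icc 1 t, β ^ (t - l) * lam l * ηs l :=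
  stmt1_general hN hB hη W hds hmin hdiag hconn γ β hγ hβ ηs lam hηs hlam x e hrec he xbar hxbar R1
    hR1 i t
end

section
/- Let β ∈ (0,1), let (η_t)_{t≥1} be a nonincreasing sequence of positive reals, and let (λ_t)_{t≥1} be positive reals. Then for every T ≥ 1, Σ_{t=1}^{T} η_t ( Σ_{l=1}^{t−1} β^{t−l} λ_l η_l )² ≤ (1/(1−β))² Σ_{l=1}^{T−1} λ_l² η_l³. -/
/-!
By weighted Cauchy–Schwarz with weights `β ^ (t - l)`, whose total is at most `1 / (1 - β)`,
`(∑ₗ β ^ (t - l) λₗ ηₗ)² ≤ (1 / (1 - β)) ∑ₗ β ^ (t - l) λₗ² ηₗ²`, and `ηₜ ≤ ηₗ` for `l < t`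
turns the extra factor `ηₜ` into a third power of `ηₗ`. Exchanging the sums over `t` and `l`,
each `l` collects the geometric tail `∑_{t > l} β ^ (t - l) ≤ 1 / (1 - β)`, which gives the
second factor.
-/

open Finset

theorem sum_pow_comp_le_one_div_one_sub {ι : Type*} {β : ℝ} (hβ₀ : 0 ≤ β) (hβ₁ : β < 1)
    {s : Finset ι} {f : ι → ℕ} (hf : Set.InjOn f s) :
    ∑ i ∈ s, β ^ f i ≤ 1 / (1 - β) := by
  classical
  rw [← sum_image hf, one_div, ← tsum_geometric_of_lt_one hβ₀ hβ₁]
  exact (summable_geometric_of_lt_one hβ₀ hβ₁).sum_le_tsum _ fun i _ => pow_nonneg hβ₀ i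

theorem sq_sum_mul_le_sum_mul_sum_mul_sq {ι R : Type*} [CommSemiring R] [LinearOrder R]
    [IsStrictOrderedRing R] [ExistsAddOfLE R] (s : Finset ι) {w a : ι → R}
    (hw : ∀ i ∈ s, 0 ≤ w i) :
    (∑ i ∈ s, w i * a i) ^ 2 ≤ (∑ i ∈ s, w i) * ∑ i ∈ s, w i * a i ^ 2 :=
  sum_sq_le_sum_mul_sum_of_sq_le_mul s hw (fun i hi => mul_nonneg (hw i hi) (sq_nonneg _))
    fun i _ => le_of_eq (by ring)

theorem mul_sq_sum_mul_le_of_le {ι : Type*} (s : Finset ι) {w a y : ι → ℝ} {x C : ℝ}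
    (hw : ∀ i ∈ s, 0 ≤ w i) (hwC : ∑ i ∈ s, w i ≤ C) (hx : 0 ≤ x) (hxy : ∀ i ∈ s, x ≤ y i) :
    x * (∑ i ∈ s, w i * a i * y i) ^ 2 ≤ C * ∑ i ∈ s, w i * (a i ^ 2 * y i ^ 3) := by
  have hsq : 0 ≤ ∑ i ∈ s, w i * (a i * y i) ^ 2 :=
    sum_nonneg fun i hi => mul_nonneg (hw i hi) (sq_nonneg _)
  have hcubes : x * ∑ i ∈ s, w i * (a i * y i) ^ 2 ≤ ∑ i ∈ s, w i * (a i ^ 2 * y i ^ 3) := by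
    rw [mul_sum]
    refine sum_le_sum fun i hi => ?_
    have hwa : 0 ≤ w i * (a i * y i) ^ 2 := mul_nonneg (hw i hi) (sq_nonneg _)
    calc x * (w i * (a i * y i) ^ 2) ≤ y i * (w i * (a i * y i) ^ 2) :=
          mul_le_mul_of_nonneg_right (hxy i hi) hwa
      _ = w i * (a i ^ 2 * y i ^ 3) := by ring
  calc x * (∑ i ∈ s, w i * a i * y i) ^ 2
      ≤ x * ((∑ i ∈ s, w i) * ∑ i ∈ s, w i * (a i * y i) ^ 2) := by
        simp_rw [mul_assoc]
        exact mul_le_mul_of_nonneg_left (sq_sum_mul_le_sum_mul_sum_mul_sq s hw) hx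
    _ ≤ x * (C * ∑ i ∈ s, w i * (a i * y i) ^ 2) := by gcongr
    _ = C * (x * ∑ i ∈ s, w i * (a i * y i) ^ 2) := by ring
    _ ≤ C * ∑ i ∈ s, w i * (a i ^ 2 * y i ^ 3) :=
        mul_le_mul_of_nonneg_left hcubes ((sum_nonneg hw).trans hwC)

theorem sum_Icc_sum_Icc_sub_one_comm {M : Type*} [AddCommMonoid M] (f : ℕ → ℕ → M) (T : ℕ) :
    ∑ t ∈ Icc 1 T, ∑ l ∈ Icc 1 (t - 1), f t l = ∑ l ∈ Icc 1 (T - 1), ∑ t ∈ Icc (l + 1) T, f t l :=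
  sum_comm' fun t l => by simp only [mem_Icc]; omega

theorem stmt9_general (β : ℝ) (hβ : β ∈ Set.Ioo (0:ℝ) 1)
    (ηs lam : ℕ → ℝ)
    (hηs : ∀ t, 1 ≤ t → 0 < ηs t)
    (hmono : ∀ t, 1 ≤ t → ηs (t+1) ≤ ηs t)
    (T : ℕ) :
    ∑ t ∈ Finset.Icc 1 T, ηs t * (∑ l ∈ Finset.Icc 1 (t-1), β ^ (t-l) * lam l * ηs l) ^ 2 ≤
      (1 / (1 - β)) ^ 2 * ∑ l ∈ Finset.Icc 1 (T-1), lam l ^ 2 * ηs l ^ 3 := by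
  obtain ⟨hβ₀, hβ₁⟩ := hβ
  have hanti : AntitoneOn ηs {t | 1 ≤ t} := antitoneOn_nat_Ici_of_succ_le hmono
  calc _ ≤ ∑ t ∈ Icc 1 T,
          1 / (1 - β) * ∑ l ∈ Icc 1 (t - 1), β ^ (t - l) * (lam l ^ 2 * ηs l ^ 3) := by
        refine sum_le_sum fun t ht => ?_
        simp only [mem_Icc] at ht
        refine mul_sq_sum_mul_le_of_le _ (fun l _ => pow_nonneg hβ₀.le _)
          (sum_pow_comp_le_one_div_one_sub hβ₀.le hβ₁ fun a ha b hb h => ?_) (hηs t ht.1).le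
          fun l hl => ?_
        · simp only [coe_Icc, Set.mem_Icc] at ha hb
          omega
        · simp only [mem_Icc] at hl
          exact hanti hl.1 ht.1 (by omega)
    _ = 1 / (1 - β) * ∑ l ∈ Icc 1 (T - 1),
          (∑ t ∈ Icc (l + 1) T, β ^ (t - l)) * (lam l ^ 2 * ηs l ^ 3) := by
        rw [← mul_sum, sum_Icc_sum_Icc_sub_one_comm]
        simp_rw [sum_mul]
    _ ≤ 1 / (1 - β) * ∑ l ∈ Icc 1 (T - 1), 1 / (1 - β) * (lam l ^ 2 * ηs l ^ 3) := by
        refine mul_le_mul_of_nonneg_left (sum_le_sum fun l hl => ?_)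
          (one_div_nonneg.2 (sub_pos.2 hβ₁).le)
        simp only [mem_Icc] at hl
        refine mul_le_mul_of_nonneg_right
          (sum_pow_comp_le_one_div_one_sub hβ₀.le hβ₁ fun a ha b hb h => ?_) ?_
        · simp only [coe_Icc, Set.mem_Icc] at ha hb
          omega
        · have := hηs l hl.1
          positivity
    _ = (1 / (1 - β)) ^ 2 * ∑ l ∈ Icc 1 (T - 1), lam l ^ 2 * ηs l ^ 3 := by
        rw [← mul_sum, sq, mul_assoc]

theorem stmt9 (β : ℝ) (hβ : β ∈ Set.Ioo (0:ℝ) 1)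
    (ηs lam : ℕ → ℝ)
    (hηs : ∀ t, 1 ≤ t → 0 < ηs t)
    (hmono : ∀ t, 1 ≤ t → ηs (t+1) ≤ ηs t)
    (hlam : ∀ t, 1 ≤ t → 0 < lam t)
    (T : ℕ) (hT : 1 ≤ T) :
    ∑ t ∈ Finset.Icc 1 T, ηs t * (∑ l ∈ Finset.Icc 1 (t-1), β ^ (t-l) * lam l * ηs l) ^ 2 ≤
      (1 / (1 - β)) ^ 2 * ∑ l ∈ Finset.Icc 1 (T-1), lam l ^ 2 * ηs l ^ 3 :=
  stmt9_general β hβ ηs lam hηs hmono T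
end
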